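/- Assume in addition W ≠ V (so that W^⊥ ≠ 0). Then the following are equivalent: (a) 1 is an eigenvalue of A and every eigenvalue of A is ≤ 1; (b) B restricted to U ∩ W is degenerate, i.e. there is a nonzero x ∈ U ∩ W with B x y = 0 for all y ∈ U ∩ W. -/

import Mathlib

noncomputable section

/-- The Minkowski bilinear form of index 1 on `ℝ^{n+2}`:
`B x y = ∑_{i=0}^{n} x i * y i − x (n+1) * y (n+1)`. -/
def mB (n : ℕ) : (Fin (n+2) → ℝ) →ₗ[ℝ] (Fin (n+2) → ℝ) →ₗ[ℝ] ℝ :=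
  LinearMap.mk₂ ℝ
    (fun x y => ∑ i : Fin (n+2), (if (i : ℕ) = n+1 then (-1:ℝ) else 1) * x i * y i)
    (fun x x' y => by
      rw [← Finset.sum_add_distrib]
      exact Finset.sum_congr rfl fun i _ => by simp only [Pi.add_apply]; ring)
    (fun c x y => by
      rw [smul_eq_mul, Finset.mul_sum]
      exact Finset.sum_congr rfl fun i _ => by simp only [Pi.smul_apply, smul_eq_mul]; ring)
    (fun x y y' => by
      rw [← Finset.sum_add_distrib]
      exact Finset.sum_congr rfl fun i _ => by simp only [Pi.add_apply]; ring)
    (fun c x y => by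
      rw [smul_eq_mul, Finset.mul_sum]
      exact Finset.sum_congr rfl fun i _ => by simp only [Pi.smul_apply, smul_eq_mul]; ring)

/-- The orthogonal complement `S^⊥ = {x | ∀ s ∈ S, B x s = 0}` w.r.t. the Minkowski form. -/
def mperp (n : ℕ) (S : Submodule ℝ (Fin (n+2) → ℝ)) : Submodule ℝ (Fin (n+2) → ℝ) where
  carrier := {x | ∀ s ∈ S, mB n x s = 0}
  zero_mem' := fun s _ => by simp
  add_mem' := fun ha hb s hs => by simp [ha s hs, hb s hs]
  smul_mem' := fun c a ha s hs => by simp [ha s hs]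

/-- A subspace is pseudo-euclidean if the Minkowski form restricted to it
is nondegenerate and it contains a timelike vector. -/
def IsPseudoEuclidean (n : ℕ) (S : Submodule ℝ (Fin (n+2) → ℝ)) : Prop :=
  (∀ x ∈ S, (∀ y ∈ S, mB n x y = 0) → x = 0) ∧ ∃ x ∈ S, mB n x x < 0


/-!
If `A v = p' (p v) = v` with `0 ≠ v ∈ W^⊥`, then `x = v - p v` lies in `U ∩ W` and is orthogonal
to `U ∩ W`; it is nonzero since `U^⊥ ∩ W^⊥ = (U + W)^⊥ = 0`. Conversely, a nonzero `x ∈ U ∩ W`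
orthogonal to `U ∩ W` lies in `(U ∩ W)^⊥ = U^⊥ + W^⊥`, and writing `x = a + b` accordingly gives
`p b = -a`, `p' (-a) = b`, so `A b = b`. Such an `x` is lightlike, and by the reverse
Cauchy–Schwarz inequality no timelike vector is orthogonal to it. But if `A v = α v` with `α > 1`,
then `B(v - p v, v - p v) = (1 - α) B(v, v) < 0`, since `B` is positive definite on `W^⊥`, while
`v - p v ⊥ x`.
-/

namespace LinearMap.BilinForm

theorem orthogonal_sup {R M : Type*} [CommRing R] [AddCommGroup M] [Module R M]
    (B : LinearMap.BilinForm R M) (N L : Submodule R M) :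
    B.orthogonal (N ⊔ L) = B.orthogonal N ⊓ B.orthogonal L := by
  ext x
  simp only [Submodule.mem_inf, mem_orthogonal_iff]
  refine ⟨fun h => ⟨fun y hy => h y (Submodule.mem_sup_left hy),
    fun y hy => h y (Submodule.mem_sup_right hy)⟩, ?_⟩
  rintro ⟨hN, hL⟩ _ hyz
  obtain ⟨y, hy, z, hz, rfl⟩ := Submodule.mem_sup.mp hyz
  rw [map_add, LinearMap.add_apply, hN y hy, hL z hz, add_zero]

theorem orthogonal_inf {K V : Type*} [Field K] [AddCommGroup V] [Module K V]
    [FiniteDimensional K V] {B : LinearMap.BilinForm K V} (hB : B.Nondegenerate)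
    (hB₀ : B.IsRefl) (N L : Submodule K V) :
    B.orthogonal (N ⊓ L) = B.orthogonal N ⊔ B.orthogonal L := by
  conv_lhs => rw [← B.orthogonal_orthogonal hB hB₀ N, ← B.orthogonal_orthogonal hB hB₀ L,
    ← orthogonal_sup, orthogonal_orthogonal hB hB₀]

end LinearMap.BilinForm

theorem Submodule.projection_apply_eq {R M : Type*} [Ring R] [AddCommGroup M] [Module R M]
    {S T : Submodule R M} (hST : Disjoint S T) {p : M → M}
    (hp : ∀ x, p x ∈ T ∧ x - p x ∈ S) {x a : M} (ha : a ∈ T) (hxa : x - a ∈ S) :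
    p x = a := by
  have hS : p x - a ∈ S := by
    simpa using sub_mem hxa (hp x).2
  exact sub_eq_zero.mp (Submodule.disjoint_def.mp hST _ hS (sub_mem (hp x).1 ha))

section Minkowski

variable {n : ℕ}

theorem mB_apply (x y : Fin (n+2) → ℝ) :
    mB n x y = ∑ i : Fin (n+2), (if (i : ℕ) = n+1 then (-1:ℝ) else 1) * x i * y i := rfl

theorem mB_eq_sum_castSucc_sub_last (x y : Fin (n+2) → ℝ) :
    mB n x y = ∑ i : Fin (n+1), x i.castSucc * y i.castSucc
      - x (Fin.last (n+1)) * y (Fin.last (n+1)) := by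
  rw [mB_apply, Fin.sum_univ_castSucc, if_pos (Fin.val_last _), sub_eq_add_neg]
  congr 1
  · exact Finset.sum_congr rfl fun i _ => by
      rw [if_neg (by simp [Fin.val_castSucc, i.isLt.ne]), one_mul]
  · ring

theorem mB_isSymm (n : ℕ) : LinearMap.BilinForm.IsSymm (mB n) :=
  ⟨fun x y => by simp only [mB_eq_sum_castSucc_sub_last, mul_comm]⟩

theorem mB_comm (x y : Fin (n+2) → ℝ) : mB n x y = mB n y x := (mB_isSymm n).eq x y

theorem mB_nondegenerate (n : ℕ) : (mB n).Nondegenerate := by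
  refine (mB_isSymm n).isRefl.nondegenerate_iff_separatingLeft.mpr fun x hx => funext fun i => ?_
  have hi := hx (Pi.single i 1)
  rw [mB_apply, Finset.sum_eq_single i (fun j _ hj => by simp [hj]) (by simp)] at hi
  split_ifs at hi <;> simpa using hi

theorem mperp_eq_orthogonal (S : Submodule ℝ (Fin (n+2) → ℝ)) :
    mperp n S = LinearMap.BilinForm.orthogonal (mB n) S := by
  ext x
  exact forall₂_congr fun s _ => by rw [mB_comm]

theorem mperp_sup (U W : Submodule ℝ (Fin (n+2) → ℝ)) :
    mperp n (U ⊔ W) = mperp n U ⊓ mperp n W := by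
  simp only [mperp_eq_orthogonal, LinearMap.BilinForm.orthogonal_sup]

theorem mperp_inf (U W : Submodule ℝ (Fin (n+2) → ℝ)) :
    mperp n (U ⊓ W) = mperp n U ⊔ mperp n W := by
  simp only [mperp_eq_orthogonal]
  exact LinearMap.BilinForm.orthogonal_inf (mB_nondegenerate n) (mB_isSymm n).isRefl U W

theorem mperp_top : mperp n ⊤ = ⊥ := by
  rw [mperp_eq_orthogonal, LinearMap.BilinForm.orthogonal_top_eq_bot (mB_nondegenerate n)]

theorem disjoint_mperp {S : Submodule ℝ (Fin (n+2) → ℝ)}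
    (hS : ∀ x ∈ S, (∀ y ∈ S, mB n x y = 0) → x = 0) : Disjoint S (mperp n S) :=
  Submodule.disjoint_def.mpr hS

theorem mB_self_pos_of_last_eq_zero {x : Fin (n+2) → ℝ} (hx : x (Fin.last (n+1)) = 0)
    (hx0 : x ≠ 0) : 0 < mB n x x := by
  rw [mB_eq_sum_castSucc_sub_last, hx, mul_zero, sub_zero]
  obtain ⟨i, hi⟩ : ∃ i : Fin (n+1), x i.castSucc ≠ 0 := by
    by_contra! h
    exact hx0 (funext (Fin.lastCases hx h))
  exact Finset.sum_pos' (fun j _ => mul_self_nonneg _) ⟨i, Finset.mem_univ _, mul_self_pos.mpr hi⟩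

theorem eq_zero_of_mB_self_nonpos_of_orthogonal_timelike {t x : Fin (n+2) → ℝ}
    (ht : mB n t t < 0) (hxt : mB n x t = 0) (hx : mB n x x ≤ 0) : x = 0 := by
  set tₘ := t (Fin.last (n+1))
  set xₘ := x (Fin.last (n+1))
  -- `z` has no time component, so `B z z ≥ 0`; expanding `B z z` then forces `xₘ = 0`.
  set z := tₘ • x - xₘ • t
  have hz : z (Fin.last (n+1)) = 0 := by
    simp only [z, Pi.sub_apply, Pi.smul_apply, smul_eq_mul]
    ring
  have hzz : mB n z z = tₘ ^ 2 * mB n x x + xₘ ^ 2 * mB n t t := by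
    simp only [z, map_sub, map_smul, LinearMap.sub_apply, LinearMap.smul_apply, smul_eq_mul,
      mB_comm t x, hxt]
    ring
  have hxₘ : xₘ = 0 := by
    by_contra hxₘ
    have hneg : mB n z z < 0 := by
      rw [hzz]
      linarith [mul_nonpos_of_nonneg_of_nonpos (sq_nonneg tₘ) hx,
        mul_neg_of_pos_of_neg (sq_pos_of_ne_zero hxₘ) ht]
    obtain hz0 | hz0 := eq_or_ne z 0
    · simp [hz0] at hneg
    · exact (mB_self_pos_of_last_eq_zero hz hz0).not_gt hneg
  by_contra hx0
  exact (mB_self_pos_of_last_eq_zero hxₘ hx0).not_ge hx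

theorem mB_self_pos_of_mem_mperp {W : Submodule ℝ (Fin (n+2) → ℝ)} {t v : Fin (n+2) → ℝ}
    (ht : t ∈ W) (htt : mB n t t < 0) (hv : v ∈ mperp n W) (hv0 : v ≠ 0) : 0 < mB n v v :=
  lt_of_not_ge fun h => hv0 (eq_zero_of_mB_self_nonpos_of_orthogonal_timelike htt (hv t ht) h)

end Minkowski

section Projections

variable {n : ℕ} {W U : Submodule ℝ (Fin (n+2) → ℝ)}
  {p p' : (Fin (n+2) → ℝ) →ₗ[ℝ] (Fin (n+2) → ℝ)}

theorem degenerate_inter_of_proj_proj_fixed (hsum : W ⊔ U = ⊤)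
    (hp : ∀ x, p x ∈ mperp n U ∧ x - p x ∈ U) (hp' : ∀ x, p' x ∈ mperp n W ∧ x - p' x ∈ W)
    {v : Fin (n+2) → ℝ} (hv : v ∈ mperp n W) (hv0 : v ≠ 0) (hfix : p' (p v) = v) :
    ∃ x ∈ U ⊓ W, x ≠ 0 ∧ ∀ y ∈ U ⊓ W, mB n x y = 0 := by
  have hxW : v - p v ∈ W := by simpa [hfix] using neg_mem (hp' (p v)).2
  refine ⟨v - p v, ⟨(hp v).2, hxW⟩, fun h => hv0 ?_, fun y ⟨hyU, hyW⟩ => ?_⟩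
  · have hvU : v ∈ mperp n U := sub_eq_zero.mp h ▸ (hp v).1
    have : v ∈ mperp n (W ⊔ U) := mperp_sup W U ▸ ⟨hv, hvU⟩
    rwa [hsum, mperp_top, Submodule.mem_bot] at this
  · rw [map_sub, LinearMap.sub_apply, hv y hyW, (hp v).1 y hyU, sub_zero]

theorem exists_proj_proj_fixed_of_degenerate_inter
    (hU : ∀ x ∈ U, (∀ y ∈ U, mB n x y = 0) → x = 0)
    (hW : ∀ x ∈ W, (∀ y ∈ W, mB n x y = 0) → x = 0)
    (hp : ∀ x, p x ∈ mperp n U ∧ x - p x ∈ U) (hp' : ∀ x, p' x ∈ mperp n W ∧ x - p' x ∈ W)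
    {x : Fin (n+2) → ℝ} (hx : x ∈ U ⊓ W) (hx0 : x ≠ 0) (hxperp : x ∈ mperp n (U ⊓ W)) :
    ∃ v ∈ mperp n W, v ≠ 0 ∧ p' (p v) = v := by
  rw [mperp_inf] at hxperp
  obtain ⟨a, ha, b, hb, rfl⟩ := Submodule.mem_sup.mp hxperp
  have hpb : p b = -a :=
    Submodule.projection_apply_eq (disjoint_mperp hU) hp (neg_mem ha)
      (by rw [sub_neg_eq_add, add_comm b]; exact hx.1)
  have hp'a : p' (-a) = b :=
    Submodule.projection_apply_eq (disjoint_mperp hW) hp' hb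
      (by rw [sub_eq_add_neg, ← neg_add]; exact neg_mem hx.2)
  refine ⟨b, hb, ?_, by rw [hpb, hp'a]⟩
  rintro rfl
  exact hx0 (hU _ hx.1 (by rw [add_zero]; exact ha))

theorem le_one_of_proj_proj_eq_smul {t : Fin (n+2) → ℝ} (ht : t ∈ W) (htt : mB n t t < 0)
    (hp : ∀ x, p x ∈ mperp n U ∧ x - p x ∈ U) (hp' : ∀ x, p' x ∈ mperp n W ∧ x - p' x ∈ W)
    {x : Fin (n+2) → ℝ} (hx : x ∈ U ⊓ W) (hx0 : x ≠ 0) (hxx : mB n x x = 0)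
    {v : Fin (n+2) → ℝ} (hv : v ∈ mperp n W) (hv0 : v ≠ 0) {α : ℝ} (hα : p' (p v) = α • v) :
    α ≤ 1 := by
  set u := v - p v with hu
  have hpu : mB n (p v) u = 0 := (hp v).1 u (hp v).2
  have hvv : mB n v v = mB n (p v) (p v) + mB n u u := by
    conv_lhs => rw [← add_sub_cancel (p v) v, ← hu]
    simp only [map_add, LinearMap.add_apply, mB_comm u (p v), hpu]
    ring
  have hαvv : α * mB n v v = mB n (p v) (p v) := by
    have hvW : mB n v (p v - p' (p v)) = 0 := hv _ (hp' (p v)).2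
    calc α * mB n v v = mB n v (p' (p v)) := by rw [hα, map_smul, smul_eq_mul]
      _ = mB n v (p v) := by rw [map_sub] at hvW; linarith
      _ = mB n (p v) (p v) := by rw [mB_comm v, ← sub_eq_zero, ← map_sub]; exact hpu
  by_contra! hα1
  have huu : mB n u u < 0 := by
    nlinarith [mB_self_pos_of_mem_mperp ht htt hv hv0]
  have hxu : mB n x u = 0 := by
    rw [mB_comm, map_sub, LinearMap.sub_apply, hv x hx.2, (hp v).1 x hx.1, sub_zero]
  exact hx0 (eq_zero_of_mB_self_nonpos_of_orthogonal_timelike huu hxu hxx.le)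

end Projections

theorem eigenvalue_one_iff_degenerate_inter_general
    (n : ℕ) (W U : Submodule ℝ (Fin (n+2) → ℝ))
    (hW : IsPseudoEuclidean n W) (hU : IsPseudoEuclidean n U)
    (hsum : W ⊔ U = ⊤)
    (p p' : (Fin (n+2) → ℝ) →ₗ[ℝ] (Fin (n+2) → ℝ))
    (hp : ∀ x, p x ∈ mperp n U ∧ x - p x ∈ U)
    (hp' : ∀ x, p' x ∈ mperp n W ∧ x - p' x ∈ W) :
    ((∃ v ∈ mperp n W, v ≠ 0 ∧ p' (p v) = v) ∧
      (∀ α : ℝ, (∃ v ∈ mperp n W, v ≠ 0 ∧ p' (p v) = α • v) → α ≤ 1)) ↔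
    (∃ x ∈ U ⊓ W, x ≠ 0 ∧ ∀ y ∈ U ⊓ W, mB n x y = 0) := by
  obtain ⟨hW, t, ht, htt⟩ := hW
  constructor
  · rintro ⟨⟨v, hv, hv0, hfix⟩, -⟩
    exact degenerate_inter_of_proj_proj_fixed hsum hp hp' hv hv0 hfix
  rintro ⟨x, hx, hx0, hxperp⟩
  refine ⟨?_, ?_⟩
  · exact exists_proj_proj_fixed_of_degenerate_inter hU.1 hW hp hp' hx hx0 hxperp
  · rintro α ⟨v, hv, hv0, hα⟩
    exact le_one_of_proj_proj_eq_smul ht htt hp hp' hx hx0 (hxperp x hx) hv hv0 hα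

/-- `1` is an eigenvalue of `A` and all eigenvalues of `A` are `≤ 1` iff the
Minkowski form restricted to `U ∩ W` is degenerate. -/
theorem eigenvalue_one_iff_degenerate_inter
    (n : ℕ) (hn : 0 < n) (W U : Submodule ℝ (Fin (n+2) → ℝ))
    (hW : IsPseudoEuclidean n W) (hU : IsPseudoEuclidean n U)
    (hsum : W ⊔ U = ⊤)
    (p p' : (Fin (n+2) → ℝ) →ₗ[ℝ] (Fin (n+2) → ℝ))
    (hp : ∀ x, p x ∈ mperp n U ∧ x - p x ∈ U)
    (hp' : ∀ x, p' x ∈ mperp n W ∧ x - p' x ∈ W)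
    (hWtop : W ≠ ⊤) :
    ((∃ v ∈ mperp n W, v ≠ 0 ∧ p' (p v) = v) ∧
      (∀ α : ℝ, (∃ v ∈ mperp n W, v ≠ 0 ∧ p' (p v) = α • v) → α ≤ 1)) ↔
    (∃ x ∈ U ⊓ W, x ≠ 0 ∧ ∀ y ∈ U ⊓ W, mB n x y = 0) :=
  eigenvalue_one_iff_degenerate_inter_general n W U hW hU hsum p p' hp hp'
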